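/- Set Δ* = θp − θq and suppose additionally that the exponential family is identifiable in the sense that for every nonzero η ∈ ℝ^k the function x ↦ ⟨η, t(x)⟩ is not constant ν-almost everywhere. If Δ ∈ ℝ^k satisfies the integrability conditions that x ↦ ⟨Δ, t(x)⟩ and x ↦ ⟨Δ*, t(x)⟩ are integrable with respect to p·dν and N(Δ; q) < ∞, and if ℓ_pop(Δ) = ℓ_pop(Δ*), where ℓ_pop(Δ) = −∫ ⟨Δ, t(x)⟩ p(x) dν(x) + log N(Δ; q), then Δ = Δ*. That is, Δ* is the unique minimizer of the population KLIEP loss. (Uniqueness part of Proposition 1.) -/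

import Mathlib

open scoped RealInnerProductSpace
open MeasureTheory

/-- The normalizing constant `Z(θ) = ∫ exp ⟪θ, t x⟫ dν(x)` of the exponential family. -/
noncomputable def expFamZ {Ω : Type*} [MeasurableSpace Ω] (ν : Measure Ω) {k : ℕ}
    (t : Ω → EuclideanSpace ℝ (Fin k)) (θ : EuclideanSpace ℝ (Fin k)) : ℝ :=
  ∫ x, Real.exp ⟪θ, t x⟫ ∂ν

/-- The exponential family density `f(x; θ) = exp ⟪θ, t x⟫ / Z(θ)`. -/
noncomputable def expFamDensity {Ω : Type*} [MeasurableSpace Ω] (ν : Measure Ω) {k : ℕ}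
    (t : Ω → EuclideanSpace ℝ (Fin k)) (θ : EuclideanSpace ℝ (Fin k)) (x : Ω) : ℝ :=
  Real.exp ⟪θ, t x⟫ / expFamZ ν t θ

/-- The KLIEP normalizer `N(Δ; q) = ∫ q(x)·exp ⟪Δ, t x⟫ dν(x)`, with `q = f(·; θq)`. -/
noncomputable def kliepN {Ω : Type*} [MeasurableSpace Ω] (ν : Measure Ω) {k : ℕ}
    (t : Ω → EuclideanSpace ℝ (Fin k)) (θq : EuclideanSpace ℝ (Fin k))
    (Δ : EuclideanSpace ℝ (Fin k)) : ℝ :=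
  ∫ x, expFamDensity ν t θq x * Real.exp ⟪Δ, t x⟫ ∂ν
/-- The population KLIEP loss
`ℓ_pop(Δ) = -∫ ⟪Δ, t x⟫ p(x) dν(x) + log N(Δ; q)`, with `p = f(·; θp)` and `q = f(·; θq)`. -/
noncomputable def kliepPopLoss {Ω : Type*} [MeasurableSpace Ω] (ν : Measure Ω) {k : ℕ}
    (t : Ω → EuclideanSpace ℝ (Fin k)) (θp θq : EuclideanSpace ℝ (Fin k))
    (Δ : EuclideanSpace ℝ (Fin k)) : ℝ :=
  -(∫ x, ⟪Δ, t x⟫ * expFamDensity ν t θp x ∂ν) + Real.log (kliepN ν t θq Δ)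

/-!
With `g = ⟪Δ - Δ*, t⟫` one has `N(Δ; q) = (Z(θp) / Z(θq)) ∫ exp g · p dν`, so
`ℓ_pop(Δ) - ℓ_pop(Δ*) = log ∫ exp g · p dν - ∫ g · p dν`, the gap in Jensen's inequality for
`exp` under `p dν`. Integrating the tangent-line bound `exp g ≥ exp c · (1 + g - c)` at
`c = ∫ g · p dν` shows this gap is nonnegative and vanishes only if `g = c` almost everywhere,
which identifiability rules out unless `Δ = Δ*`.
-/

theorem Real.exp_mul_one_add_sub_le_exp (c y : ℝ) : Real.exp c * (1 + (y - c)) ≤ Real.exp y := by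
  rw [show Real.exp y = Real.exp c * Real.exp (y - c) by rw [← Real.exp_add]; ring_nf]
  gcongr
  linarith [Real.add_one_le_exp (y - c)]

theorem Real.exp_mul_one_add_sub_lt_exp {c y : ℝ} (h : y ≠ c) :
    Real.exp c * (1 + (y - c)) < Real.exp y := by
  rw [show Real.exp y = Real.exp c * Real.exp (y - c) by rw [← Real.exp_add]; ring_nf]
  gcongr
  linarith [Real.add_one_lt_exp (sub_ne_zero.mpr h)]

section JensenExp

variable {Ω : Type*} [MeasurableSpace Ω] {ν : Measure Ω} {p g : Ω → ℝ}

theorem integrable_exp_sub_tangent_mul (hp : ∫ x, p x ∂ν = 1)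
    (hg : Integrable (fun x => g x * p x) ν)
    (hexp : Integrable (fun x => Real.exp (g x) * p x) ν) (c : ℝ) :
    Integrable (fun x => (Real.exp (g x) - Real.exp c * (1 + (g x - c))) * p x) ν := by
  have hpi : Integrable p ν := Integrable.of_integral_ne_zero (by simp [hp])
  have hlin : Integrable (fun x => Real.exp c * ((1 - c) * p x + g x * p x)) ν :=
    ((hpi.const_mul (1 - c)).add hg).const_mul (Real.exp c)
  exact (hexp.sub hlin).congr (ae_of_all _ fun x => by simp only [Pi.sub_apply]; ring)

theorem integral_exp_sub_tangent_mul (hp : ∫ x, p x ∂ν = 1)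
    (hg : Integrable (fun x => g x * p x) ν)
    (hexp : Integrable (fun x => Real.exp (g x) * p x) ν) (c : ℝ) :
    ∫ x, (Real.exp (g x) - Real.exp c * (1 + (g x - c))) * p x ∂ν
      = (∫ x, Real.exp (g x) * p x ∂ν) - Real.exp c * (1 + ((∫ x, g x * p x ∂ν) - c)) := by
  have hpi : Integrable p ν := Integrable.of_integral_ne_zero (by simp [hp])
  have hlin : Integrable (fun x => (1 - c) * p x + g x * p x) ν := (hpi.const_mul (1 - c)).add hg
  have hexpand : ∀ x, (Real.exp (g x) - Real.exp c * (1 + (g x - c))) * p x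
      = Real.exp (g x) * p x - Real.exp c * ((1 - c) * p x + g x * p x) := fun x => by ring
  simp_rw [hexpand]
  rw [integral_sub hexp (hlin.const_mul _), integral_const_mul,
    integral_add (hpi.const_mul _) hg, integral_const_mul, hp]
  ring

theorem exp_integral_mul_le_integral_exp_mul (hp0 : ∀ᵐ x ∂ν, 0 ≤ p x)
    (hp : ∫ x, p x ∂ν = 1) (hg : Integrable (fun x => g x * p x) ν)
    (hexp : Integrable (fun x => Real.exp (g x) * p x) ν) :
    Real.exp (∫ x, g x * p x ∂ν) ≤ ∫ x, Real.exp (g x) * p x ∂ν := by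
  set c := ∫ x, g x * p x ∂ν
  have hgap : 0 ≤ ∫ x, (Real.exp (g x) - Real.exp c * (1 + (g x - c))) * p x ∂ν := by
    refine integral_nonneg_of_ae ?_
    filter_upwards [hp0] with x hx
    exact mul_nonneg (sub_nonneg.mpr (Real.exp_mul_one_add_sub_le_exp c (g x))) hx
  rw [integral_exp_sub_tangent_mul hp hg hexp c, sub_self, add_zero, mul_one] at hgap
  linarith

theorem ae_eq_integral_mul_of_exp_integral_mul_eq (hp0 : ∀ᵐ x ∂ν, 0 < p x)
    (hp : ∫ x, p x ∂ν = 1) (hg : Integrable (fun x => g x * p x) ν)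
    (hexp : Integrable (fun x => Real.exp (g x) * p x) ν)
    (heq : Real.exp (∫ x, g x * p x ∂ν) = ∫ x, Real.exp (g x) * p x ∂ν) :
    ∀ᵐ x ∂ν, g x = ∫ x, g x * p x ∂ν := by
  set c := ∫ x, g x * p x ∂ν
  have hgap_nonneg :
      0 ≤ᵐ[ν] fun x => (Real.exp (g x) - Real.exp c * (1 + (g x - c))) * p x := by
    filter_upwards [hp0] with x hx
    exact mul_nonneg (sub_nonneg.mpr (Real.exp_mul_one_add_sub_le_exp c (g x))) hx.le
  have hgap_zero := (integral_eq_zero_iff_of_nonneg_ae hgap_nonneg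
    (integrable_exp_sub_tangent_mul hp hg hexp c)).mp (by
      rw [integral_exp_sub_tangent_mul hp hg hexp c, ← heq]; ring)
  filter_upwards [hgap_zero, hp0] with x hx hpx
  by_contra hne
  have hpos := mul_pos (sub_pos.mpr (Real.exp_mul_one_add_sub_lt_exp hne)) hpx
  exact hpos.ne' hx

end JensenExp

section ExpFamily

variable {Ω : Type*} [MeasurableSpace Ω] {ν : Measure Ω} {k : ℕ}
  {t : Ω → EuclideanSpace ℝ (Fin k)}

theorem expFamDensity_pos {θ : EuclideanSpace ℝ (Fin k)} (hZ : 0 < expFamZ ν t θ) (x : Ω) :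
    0 < expFamDensity ν t θ x :=
  div_pos (Real.exp_pos _) hZ

theorem integral_expFamDensity {θ : EuclideanSpace ℝ (Fin k)} (hZ : expFamZ ν t θ ≠ 0) :
    ∫ x, expFamDensity ν t θ x ∂ν = 1 := by
  simp only [expFamDensity, integral_div]
  exact div_self hZ

theorem expFamDensity_mul_exp_inner {θp θq : EuclideanSpace ℝ (Fin k)}
    (hZp : expFamZ ν t θp ≠ 0) (Δ : EuclideanSpace ℝ (Fin k)) (x : Ω) :
    expFamDensity ν t θq x * Real.exp ⟪Δ, t x⟫ = expFamZ ν t θp / expFamZ ν t θq *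
      (Real.exp ⟪Δ - (θp - θq), t x⟫ * expFamDensity ν t θp x) := by
  simp only [expFamDensity, inner_sub_left, Real.exp_sub]
  field_simp

theorem kliepN_eq_mul_integral {θp θq : EuclideanSpace ℝ (Fin k)} (hZp : expFamZ ν t θp ≠ 0)
    (Δ : EuclideanSpace ℝ (Fin k)) :
    kliepN ν t θq Δ = expFamZ ν t θp / expFamZ ν t θq *
      ∫ x, Real.exp ⟪Δ - (θp - θq), t x⟫ * expFamDensity ν t θp x ∂ν := by
  simp_rw [kliepN, expFamDensity_mul_exp_inner hZp Δ, integral_const_mul]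

theorem kliepN_sub {θp θq : EuclideanSpace ℝ (Fin k)} (hZp : expFamZ ν t θp ≠ 0) :
    kliepN ν t θq (θp - θq) = expFamZ ν t θp / expFamZ ν t θq := by
  simp [kliepN_eq_mul_integral hZp, integral_expFamDensity hZp]

theorem kliepPopLoss_sub_kliepPopLoss {θp θq Δ : EuclideanSpace ℝ (Fin k)}
    (hZp : 0 < expFamZ ν t θp) (hZq : 0 < expFamZ ν t θq)
    (hiΔ : Integrable (fun x => ⟪Δ, t x⟫ * expFamDensity ν t θp x) ν)
    (hiΔs : Integrable (fun x => ⟪θp - θq, t x⟫ * expFamDensity ν t θp x) ν)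
    (hI : 0 < ∫ x, Real.exp ⟪Δ - (θp - θq), t x⟫ * expFamDensity ν t θp x ∂ν) :
    kliepPopLoss ν t θp θq Δ - kliepPopLoss ν t θp θq (θp - θq)
      = Real.log (∫ x, Real.exp ⟪Δ - (θp - θq), t x⟫ * expFamDensity ν t θp x ∂ν)
        - ∫ x, ⟪Δ - (θp - θq), t x⟫ * expFamDensity ν t θp x ∂ν := by
  have hsplit : ∫ x, ⟪Δ - (θp - θq), t x⟫ * expFamDensity ν t θp x ∂ν
      = (∫ x, ⟪Δ, t x⟫ * expFamDensity ν t θp x ∂ν)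
        - ∫ x, ⟪θp - θq, t x⟫ * expFamDensity ν t θp x ∂ν := by
    rw [← integral_sub hiΔ hiΔs]
    simp only [inner_sub_left Δ, sub_mul]
  rw [kliepPopLoss, kliepPopLoss, kliepN_eq_mul_integral hZp.ne', kliepN_sub hZp.ne',
    Real.log_mul (div_pos hZp hZq).ne' hI.ne', hsplit]
  ring

end ExpFamily

theorem kliepPopLoss_unique_min_general {Ω : Type*} [MeasurableSpace Ω] (ν : Measure Ω) {k : ℕ}
    (t : Ω → EuclideanSpace ℝ (Fin k))
    (θp θq : EuclideanSpace ℝ (Fin k))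
    (hZp : 0 < expFamZ ν t θp) (hZq : 0 < expFamZ ν t θq)
    (hident : ∀ η : EuclideanSpace ℝ (Fin k), η ≠ 0 →
      ∀ c : ℝ, ¬ (∀ᵐ x ∂ν, ⟪η, t x⟫ = c)) :
    ∀ Δ : EuclideanSpace ℝ (Fin k),
      Integrable (fun x => ⟪Δ, t x⟫ * expFamDensity ν t θp x) ν →
      Integrable (fun x => ⟪θp - θq, t x⟫ * expFamDensity ν t θp x) ν →
      Integrable (fun x => expFamDensity ν t θq x * Real.exp ⟪Δ, t x⟫) ν →
      kliepPopLoss ν t θp θq Δ = kliepPopLoss ν t θp θq (θp - θq) →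
      Δ = θp - θq := by
  intro Δ hiΔ hiΔs hiN heq
  have hp0 : ∀ᵐ x ∂ν, 0 < expFamDensity ν t θp x := ae_of_all _ (expFamDensity_pos hZp)
  have hp1 := integral_expFamDensity (ν := ν) (t := t) hZp.ne'
  have hg : Integrable (fun x => ⟪Δ - (θp - θq), t x⟫ * expFamDensity ν t θp x) ν :=
    (hiΔ.sub hiΔs).congr (ae_of_all _ fun x => by
      simp only [Pi.sub_apply, inner_sub_left Δ, sub_mul])
  have hexp : Integrable
      (fun x => Real.exp ⟪Δ - (θp - θq), t x⟫ * expFamDensity ν t θp x) ν := by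
    refine (hiN.const_mul (expFamZ ν t θq / expFamZ ν t θp)).congr (ae_of_all _ fun x => ?_)
    simp only [expFamDensity_mul_exp_inner hZp.ne', ← mul_assoc]
    field_simp
  have hjensen := exp_integral_mul_le_integral_exp_mul (hp0.mono fun _ h => h.le) hp1 hg hexp
  have hI := (Real.exp_pos _).trans_le hjensen
  have hgap := kliepPopLoss_sub_kliepPopLoss hZp hZq hiΔ hiΔs hI
  have hconst := ae_eq_integral_mul_of_exp_integral_mul_eq hp0 hp1 hg hexp (by
    rw [← Real.exp_log hI]
    congr 1
    linarith)
  by_contra hne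
  exact hident _ (sub_ne_zero.mpr hne) _ hconst

/-- Uniqueness part of Proposition 1: if the family is identifiable (no nonzero `η` makes
`⟪η, t x⟫` ν-a.e. constant), then `Δ* = θp - θq` is the unique minimizer of the population
KLIEP loss among `Δ` satisfying the integrability conditions. -/
theorem kliepPopLoss_unique_min {Ω : Type*} [MeasurableSpace Ω] (ν : Measure Ω) {k : ℕ}
    (t : Ω → EuclideanSpace ℝ (Fin k)) (ht : Measurable t)
    (θp θq : EuclideanSpace ℝ (Fin k))
    (hip : Integrable (fun x => Real.exp ⟪θp, t x⟫) ν)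
    (hiq : Integrable (fun x => Real.exp ⟪θq, t x⟫) ν)
    (hZp : 0 < expFamZ ν t θp) (hZq : 0 < expFamZ ν t θq)
    (hident : ∀ η : EuclideanSpace ℝ (Fin k), η ≠ 0 →
      ∀ c : ℝ, ¬ (∀ᵐ x ∂ν, ⟪η, t x⟫ = c)) :
    ∀ Δ : EuclideanSpace ℝ (Fin k),
      Integrable (fun x => ⟪Δ, t x⟫ * expFamDensity ν t θp x) ν →
      Integrable (fun x => ⟪θp - θq, t x⟫ * expFamDensity ν t θp x) ν →
      Integrable (fun x => expFamDensity ν t θq x * Real.exp ⟪Δ, t x⟫) ν →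
      kliepPopLoss ν t θp θq Δ = kliepPopLoss ν t θp θq (θp - θq) →
      Δ = θp - θq :=
  kliepPopLoss_unique_min_general ν t θp θq hZp hZq hident
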